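/- arXiv:2301.08540 — 5 statements merged into one kernel-verified Lean document; each statement's English description precedes it below -/
import Mathlib

section
/- Let (x_k) be a sequence of positive reals with x_{k+1} ≥ 2 x_k and x_k ≥ 2k for all k ≥ 0. Then for every n ∈ ℤ and k, m ∈ ℕ, if |n ± x_k| = m + x_m (for either choice of sign), then either |n| = m or |n| ≥ x_m / 2. -/
/-! Compare `k` with `m`. If `k < m` then `x k ≤ x m / 2`, so shifting `n` by `x k` cannot
reach `m + x m` unless `|n|` is already at least `x m / 2`. If `k > m` then `x k ≥ 2 x m`,
and the shift overshoots by at least `x m - m ≥ x m / 2` since `x m ≥ 2 m`. If `k = m` the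
equation `|n + x m| = m + x m` forces `n = m` or `n = -m - 2 x m`.
The case `|n - x k|` is the case `|-n + x k|`. -/

section ShiftedAbs

variable {α : Type*} [Field α] [LinearOrder α] [IsStrictOrderedRing α] {a b c M : α}

theorem half_le_abs_of_abs_add_eq_small_shift (hb : 0 ≤ b) (hM : 0 ≤ M) (hbc : 2 * b ≤ c)
    (h : |a + b| = M + c) : c / 2 ≤ |a| := by
  have := abs_add_le a b
  rw [abs_of_nonneg hb] at this
  linarith

theorem half_le_abs_of_abs_add_eq_large_shift (hcb : 2 * c ≤ b) (hMc : 2 * M ≤ c)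
    (h : |a + b| = M + c) : c / 2 ≤ |a| := by
  have : |b| ≤ |a + b| + |a| := by simpa using abs_add_le (a + b) (-a)
  linarith [le_abs_self b]

theorem abs_eq_or_half_le_abs_of_abs_add_self_eq (hM : 0 ≤ M) (hc : 0 ≤ c)
    (h : |a + c| = M + c) : |a| = M ∨ c / 2 ≤ |a| := by
  rcases eq_or_eq_neg_of_abs_eq h with h | h
  · left
    rw [add_right_cancel h, abs_of_nonneg hM]
  · right
    rw [show a = -(M + 2 * c) by linear_combination h, abs_neg, abs_of_nonneg (by positivity)]
    linarith

end ShiftedAbs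

theorem two_mul_le_of_lt_of_two_mul_le_succ {α : Type*} [Semiring α] [PartialOrder α]
    [IsOrderedRing α] {x : ℕ → α} (hx : ∀ k, 0 ≤ x k) (hdouble : ∀ k, 2 * x k ≤ x (k + 1))
    {k m : ℕ} (hkm : k < m) : 2 * x k ≤ x m := by
  induction m, hkm using Nat.le_induction with
  | base => exact hdouble k
  | succ m _ ih =>
    calc 2 * x k ≤ x m := ih
      _ ≤ 2 * x m := le_mul_of_one_le_left (hx m) one_le_two
      _ ≤ x (m + 1) := hdouble m

theorem abs_eq_or_half_le_abs_of_abs_add_eq (x : ℕ → ℝ) (hdouble : ∀ k, 2 * x k ≤ x (k + 1))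
    (hgrow : ∀ k : ℕ, (2 * k : ℝ) ≤ x k) (a : ℝ) (k m : ℕ) (h : |a + x k| = m + x m) :
    |a| = m ∨ x m / 2 ≤ |a| := by
  have hx (j : ℕ) : 0 ≤ x j := le_trans (by positivity) (hgrow j)
  rcases lt_trichotomy k m with hkm | rfl | hmk
  · exact .inr <| half_le_abs_of_abs_add_eq_small_shift (hx k) m.cast_nonneg
      (two_mul_le_of_lt_of_two_mul_le_succ hx hdouble hkm) h
  · exact abs_eq_or_half_le_abs_of_abs_add_self_eq k.cast_nonneg (hx k) h
  · exact .inr <| half_le_abs_of_abs_add_eq_large_shift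
      (two_mul_le_of_lt_of_two_mul_le_succ hx hdouble hmk) (hgrow m) h

theorem stmt_0_general (x : ℕ → ℝ)
    (hdouble : ∀ k, 2 * x k ≤ x (k + 1)) (hgrow : ∀ k : ℕ, (2 * k : ℝ) ≤ x k)
    (n : ℤ) (k m : ℕ)
    (h : |(n : ℝ) + x k| = m + x m ∨ |(n : ℝ) - x k| = m + x m) :
    |(n : ℝ)| = m ∨ x m / 2 ≤ |(n : ℝ)| := by
  rcases h with h | h
  · exact abs_eq_or_half_le_abs_of_abs_add_eq x hdouble hgrow n k m h
  · rw [← abs_neg, neg_sub', sub_neg_eq_add] at h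
    rw [← abs_neg (n : ℝ)]
    exact abs_eq_or_half_le_abs_of_abs_add_eq x hdouble hgrow (-n) k m h

theorem stmt_0 (x : ℕ → ℝ) (hpos : ∀ k, 0 < x k)
    (hdouble : ∀ k, 2 * x k ≤ x (k + 1)) (hgrow : ∀ k : ℕ, (2 * k : ℝ) ≤ x k)
    (n : ℤ) (k m : ℕ)
    (h : |(n : ℝ) + x k| = m + x m ∨ |(n : ℝ) - x k| = m + x m) :
    |(n : ℝ)| = m ∨ x m / 2 ≤ |(n : ℝ)| :=
  stmt_0_general x hdouble hgrow n k m h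
end

section
/- Let φ : [0, ∞) → (0, ∞) be a decreasing continuous function such that r^{d−1} φ(r) is integrable on [0, ∞), and suppose there is c₂ ≥ 1 with φ(r/2) ≤ c₂ φ(r) for all r ≥ 0. Then there is ε > 0 such that Y(x) = ε φ(|x|) satisfies (Y * Y)(x) ≤ Y(x) for all x ∈ ℝ^d. -/
/-!
Since `‖y‖ + ‖x - y‖ ≥ ‖x‖`, one of `‖y‖`, `‖x - y‖` is at least `‖x‖ / 2`, where monotonicity and
doubling bound `φ` by `c₂ φ(‖x‖)`. Hence `φ(‖x - y‖) φ(‖y‖) ≤ c₂ φ(‖x‖) (φ(‖y‖) + φ(‖x - y‖))`, and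
integrating in `y` gives `φ * φ ≤ 2 c₂ I φ` with `I = ∫ φ(‖y‖) dy`, finite by polar coordinates.
So `Y = ε φ(‖·‖)` with `2 c₂ I ε ≤ 1` works, because `Y * Y` scales like `ε²`.
-/

open MeasureTheory Set

lemma integrable_comp_norm_euclideanSpace {d : ℕ} (hd : 1 ≤ d) {f : ℝ → ℝ}
    (hf : IntegrableOn (fun r => r ^ (d - 1) * f r) (Ioi 0)) :
    Integrable (fun x : EuclideanSpace ℝ (Fin d) => f ‖x‖) := by
  have : Nonempty (Fin d) := ⟨⟨0, hd⟩⟩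
  rw [integrable_fun_norm_addHaar, finrank_euclideanSpace_fin]
  simpa only [smul_eq_mul] using hf

section Doubling

variable {E : Type*} [SeminormedAddCommGroup E] {φ : ℝ → ℝ} {c : ℝ}

lemma comp_norm_sub_mul_comp_norm_le (hφ : ∀ r, 0 ≤ r → 0 ≤ φ r) (hanti : AntitoneOn φ (Ici 0))
    (hdbl : ∀ r, 0 ≤ r → φ (r / 2) ≤ c * φ r) (x y : E) :
    φ ‖x - y‖ * φ ‖y‖ ≤ c * φ ‖x‖ * (φ ‖y‖ + φ ‖x - y‖) := by
  have hle : ∀ z : E, ‖x‖ / 2 ≤ ‖z‖ → φ ‖z‖ ≤ c * φ ‖x‖ := fun z hz =>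
    (hanti (by positivity : (0 : ℝ) ≤ ‖x‖ / 2) (norm_nonneg z) hz).trans (hdbl _ (norm_nonneg x))
  have hcx : 0 ≤ c * φ ‖x‖ := (hφ _ (by positivity)).trans (hdbl _ (norm_nonneg x))
  have hy := hφ _ (norm_nonneg y)
  have hxy := hφ _ (norm_nonneg (x - y))
  rcases le_or_gt (‖x‖ / 2) ‖y‖ with h | h
  · nlinarith [hle y h]
  · have : ‖x‖ / 2 ≤ ‖x - y‖ := by linarith [norm_sub_norm_le x y]
    nlinarith [hle (x - y) this]

variable [MeasurableSpace E] [BorelSpace E] {μ : Measure E} [μ.IsAddLeftInvariant]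
  [μ.IsNegInvariant]

lemma integral_comp_norm_sub_mul_comp_norm_le (hφ : ∀ r, 0 ≤ r → 0 ≤ φ r)
    (hanti : AntitoneOn φ (Ici 0)) (hdbl : ∀ r, 0 ≤ r → φ (r / 2) ≤ c * φ r)
    (hint : Integrable (fun y => φ ‖y‖) μ) (x : E) :
    ∫ y, φ ‖x - y‖ * φ ‖y‖ ∂μ ≤ 2 * c * (∫ y, φ ‖y‖ ∂μ) * φ ‖x‖ := by
  have hint_sub : Integrable (fun y => φ ‖x - y‖) μ := hint.comp_sub_left x
  calc ∫ y, φ ‖x - y‖ * φ ‖y‖ ∂μ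
      ≤ ∫ y, c * φ ‖x‖ * (φ ‖y‖ + φ ‖x - y‖) ∂μ :=
        integral_mono_of_nonneg (.of_forall fun y => mul_nonneg (hφ _ (norm_nonneg _))
          (hφ _ (norm_nonneg _))) ((hint.add hint_sub).const_mul _)
          (.of_forall (comp_norm_sub_mul_comp_norm_le hφ hanti hdbl x))
    _ = 2 * c * (∫ y, φ ‖y‖ ∂μ) * φ ‖x‖ := by
        rw [integral_const_mul, integral_add hint hint_sub,
          integral_sub_left_eq_self (fun y => φ ‖y‖) μ x]
        ring

end Doubling

open MeasureTheory in
theorem stmt_7_general (d : ℕ) (hd : 1 ≤ d) (φ : ℝ → ℝ)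
    (hpos : ∀ r, 0 ≤ r → 0 < φ r)
    (hmono : ∀ a b, 0 ≤ a → a ≤ b → φ b ≤ φ a)
    (hint : IntegrableOn (fun r => r ^ (d - 1) * φ r) (Set.Ici 0))
    (c₂ : ℝ) (hc₂ : 1 ≤ c₂) (hdbl : ∀ r, 0 ≤ r → φ (r / 2) ≤ c₂ * φ r) :
    ∃ ε > 0, ∀ x : EuclideanSpace ℝ (Fin d),
      (∫ y, (ε * φ ‖x - y‖) * (ε * φ ‖y‖)) ≤ ε * φ ‖x‖ := by
  have hφ : ∀ r, 0 ≤ r → 0 ≤ φ r := fun r hr => (hpos r hr).le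
  have hanti : AntitoneOn φ (Ici 0) := fun a ha b _ hab => hmono a b ha hab
  have hconv := integral_comp_norm_sub_mul_comp_norm_le hφ hanti hdbl
    (integrable_comp_norm_euclideanSpace hd (hint.mono_set Ioi_subset_Ici_self))
  set I := ∫ y : EuclideanSpace ℝ (Fin d), φ ‖y‖
  have hI : 0 ≤ I := integral_nonneg fun y => hφ _ (norm_nonneg y)
  -- `I + 1` rather than `I` spares proving `0 < I`.
  have hden : 0 < 2 * c₂ * (I + 1) := by positivity
  set ε := (2 * c₂ * (I + 1))⁻¹
  have hε : 0 < ε := inv_pos.mpr hden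
  have hεI : ε * (2 * c₂ * I) ≤ 1 := by
    rw [inv_mul_le_one₀ hden]
    nlinarith
  refine ⟨ε, hε, fun x => ?_⟩
  calc ∫ y, (ε * φ ‖x - y‖) * (ε * φ ‖y‖)
      = ε * (ε * ∫ y, φ ‖x - y‖ * φ ‖y‖) := by
        rw [← integral_const_mul, ← integral_const_mul]
        congr 1 with y
        ring
    _ ≤ ε * (ε * (2 * c₂ * I * φ ‖x‖)) :=
        mul_le_mul_of_nonneg_left (mul_le_mul_of_nonneg_left (hconv x) hε.le) hε.le
    _ = ε * (ε * (2 * c₂ * I) * φ ‖x‖) := by ring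
    _ ≤ ε * φ ‖x‖ :=
        mul_le_mul_of_nonneg_left (mul_le_of_le_one_left (hφ _ (norm_nonneg x)) hεI) hε.le

open MeasureTheory in
theorem stmt_7 (d : ℕ) (hd : 1 ≤ d) (φ : ℝ → ℝ)
    (hpos : ∀ r, 0 ≤ r → 0 < φ r)
    (hmono : ∀ a b, 0 ≤ a → a ≤ b → φ b ≤ φ a)
    (hcont : ContinuousOn φ (Set.Ici 0))
    (hint : IntegrableOn (fun r => r ^ (d - 1) * φ r) (Set.Ici 0))
    (c₂ : ℝ) (hc₂ : 1 ≤ c₂) (hdbl : ∀ r, 0 ≤ r → φ (r / 2) ≤ c₂ * φ r) :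
    ∃ ε > 0, ∀ x : EuclideanSpace ℝ (Fin d),
      (∫ y, (ε * φ ‖x - y‖) * (ε * φ ‖y‖)) ≤ ε * φ ‖x‖ :=
  stmt_7_general d hd φ hpos hmono hint c₂ hc₂ hdbl
end

section
/- Let α > 0 and d ≥ 1. The function Y(x) = (1 + |x|)^{−d−α} on ℝ^d satisfies: there exists a constant C such that (Y * Y)(x) ≤ C · Y(x) for all x ∈ ℝ^d. -/
/-!
Since `‖x‖ ≤ ‖x - y‖ + ‖y‖`, one of `‖x - y‖`, `‖y‖` is at least `‖x‖ / 2`, so the smaller of the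
two factors `Y (x - y)`, `Y y` is at most `2 ^ (d + α) * Y x`. Bounding the larger factor by the sum
of both gives `Y (x - y) * Y y ≤ 2 ^ (d + α) * Y x * (Y (x - y) + Y y)`, and integrating in `y`
yields the claim with `C = 2 ^ (d + α) * 2 * ‖Y‖₁`, finite because `d + α > d`.
-/

open MeasureTheory Real Module

lemma mul_le_mul_add_of_min_le {a b K : ℝ} (ha : 0 ≤ a) (hb : 0 ≤ b) (h : min a b ≤ K) :
    a * b ≤ K * (a + b) := by
  rcases le_total a b with hab | hab
  · rw [min_eq_left hab] at h; nlinarith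
  · rw [min_eq_right hab] at h; nlinarith

lemma one_add_rpow_neg_le_of_le_two_mul {p s t : ℝ} (hp : 0 ≤ p) (hs : 0 ≤ s) (hst : s ≤ 2 * t) :
    (1 + t) ^ (-p) ≤ 2 ^ p * (1 + s) ^ (-p) := by
  have ht : 0 ≤ 1 + t := by linarith
  calc (1 + t) ^ (-p) = 2 ^ p * (2 * (1 + t)) ^ (-p) := by
        rw [mul_rpow zero_le_two ht, ← mul_assoc, ← rpow_add two_pos, add_neg_cancel, rpow_zero,
          one_mul]
    _ ≤ 2 ^ p * (1 + s) ^ (-p) := by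
        gcongr 2 ^ p * ?_
        exact rpow_le_rpow_of_nonpos (by linarith) (by linarith) (by linarith)

section Pointwise

variable {E : Type*} [SeminormedAddCommGroup E] {p : ℝ}

lemma min_one_add_norm_rpow_neg_le (hp : 0 ≤ p) (x y : E) :
    min ((1 + ‖x - y‖) ^ (-p)) ((1 + ‖y‖) ^ (-p)) ≤ 2 ^ p * (1 + ‖x‖) ^ (-p) := by
  have htri : ‖x‖ ≤ ‖x - y‖ + ‖y‖ := norm_le_norm_sub_add x y
  rcases le_total ‖x - y‖ ‖y‖ with h | h
  · exact (min_le_right _ _).trans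
      (one_add_rpow_neg_le_of_le_two_mul hp (norm_nonneg x) (by linarith))
  · exact (min_le_left _ _).trans
      (one_add_rpow_neg_le_of_le_two_mul hp (norm_nonneg x) (by linarith))

lemma one_add_norm_rpow_neg_mul_le (hp : 0 ≤ p) (x y : E) :
    (1 + ‖x - y‖) ^ (-p) * (1 + ‖y‖) ^ (-p) ≤
      2 ^ p * (1 + ‖x‖) ^ (-p) * ((1 + ‖x - y‖) ^ (-p) + (1 + ‖y‖) ^ (-p)) :=
  mul_le_mul_add_of_min_le (by positivity) (by positivity) (min_one_add_norm_rpow_neg_le hp x y)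

end Pointwise

theorem integral_one_add_norm_rpow_neg_mul_le {E : Type*} [NormedAddCommGroup E]
    [NormedSpace ℝ E] [FiniteDimensional ℝ E] [MeasurableSpace E] [BorelSpace E]
    (μ : Measure E) [μ.IsAddHaarMeasure] {p : ℝ} (hp : (finrank ℝ E : ℝ) < p) (x : E) :
    ∫ y, (1 + ‖x - y‖) ^ (-p) * (1 + ‖y‖) ^ (-p) ∂μ ≤
      2 ^ p * (2 * ∫ y, (1 + ‖y‖) ^ (-p) ∂μ) * (1 + ‖x‖) ^ (-p) := by
  have hp0 : 0 ≤ p := (Nat.cast_nonneg _).trans hp.le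
  set f : E → ℝ := fun y ↦ (1 + ‖y‖) ^ (-p)
  have hf : Integrable f μ := integrable_one_add_norm hp
  -- `f (x - y) = f (y - x)` reduces both facts to the right invariance of `μ`.
  have hf_sub : Integrable (fun y ↦ f (x - y)) μ := by
    simpa only [f, norm_sub_rev x] using hf.comp_sub_right x
  have hf_sub_eq : ∫ y, f (x - y) ∂μ = ∫ y, f y ∂μ := by
    simpa only [f, norm_sub_rev x] using integral_sub_right_eq_self f x
  have hbound : Integrable (fun y ↦ 2 ^ p * f x * (f (x - y) + f y)) μ :=
    (hf_sub.add hf).const_mul _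
  have hprod : Integrable (fun y ↦ f (x - y) * f y) μ := by
    refine hbound.mono' (by fun_prop) (Filter.Eventually.of_forall fun y ↦ ?_)
    rw [Real.norm_of_nonneg (by positivity)]
    exact one_add_norm_rpow_neg_mul_le hp0 x y
  calc ∫ y, f (x - y) * f y ∂μ ≤ ∫ y, 2 ^ p * f x * (f (x - y) + f y) ∂μ :=
        integral_mono hprod hbound fun y ↦ one_add_norm_rpow_neg_mul_le hp0 x y
    _ = 2 ^ p * (2 * ∫ y, f y ∂μ) * f x := by
        rw [integral_const_mul, integral_add hf_sub hf, hf_sub_eq]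
        ring

theorem stmt_9_general (d : ℕ) (α : ℝ) (hα : 0 < α) :
    ∃ C : ℝ, ∀ x : EuclideanSpace ℝ (Fin d),
      (∫ y, (1 + ‖x - y‖) ^ (-(d : ℝ) - α) * (1 + ‖y‖) ^ (-(d : ℝ) - α)) ≤
        C * (1 + ‖x‖) ^ (-(d : ℝ) - α) := by
  have hp : (finrank ℝ (EuclideanSpace ℝ (Fin d)) : ℝ) < d + α := by
    rw [finrank_euclideanSpace_fin]; linarith
  rw [show -(d : ℝ) - α = -(d + α) by ring]
  exact ⟨_, integral_one_add_norm_rpow_neg_mul_le volume hp⟩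

theorem stmt_9 (d : ℕ) (hd : 1 ≤ d) (α : ℝ) (hα : 0 < α) :
    ∃ C : ℝ, ∀ x : EuclideanSpace ℝ (Fin d),
      (∫ y, (1 + ‖x - y‖) ^ (-(d : ℝ) - α) * (1 + ‖y‖) ^ (-(d : ℝ) - α)) ≤
        C * (1 + ‖x‖) ^ (-(d : ℝ) - α) :=
  stmt_9_general d α hα
end

section
/- Define p_k = 2^{−k−2}, x_k = 2^{2k²}, h₋₁(n) = 1 if n = 0 and 0 otherwise, and recursively h_m(n) = h_{m−1}(n) + a_m·1_{{−m−x_m, m+x_m}}(n), where a₀ = 2 and for m ≥ 1, a_m = −(1/p_m)·(Σ_{k=0}^∞ p_k (h_{m−1}(m + x_k) + h_{m−1}(m − x_k)) − h_{m−1}(m)). Then for each m ≥ 0 and each n with |n| ≤ m, one has Σ_{k=0}^∞ p_k (h_m(n + x_k) + h_m(n − x_k)) − h_m(n) = 0. -/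
/-- The weights `p_k = 2^{-k-2}`. -/
noncomputable def pcoef (k : ℕ) : ℝ := ((2 : ℝ) ^ (k + 2))⁻¹

/-- The jumps `x_k = 2^{2k²}`. -/
def xseq (k : ℕ) : ℤ := 2 ^ (2 * k ^ 2)

/-- The correction coefficient `a_m`, computed from `h_{m-1}` (given as `f`):
`a₀ = 2` and `a_m = -(1/p_m) (Σ_k p_k (f(m+x_k)+f(m-x_k)) - f(m))` for `m ≥ 1`. -/
noncomputable def acoef (m : ℕ) (f : ℤ → ℝ) : ℝ :=
  if m = 0 then 2
  else -(1 / pcoef m) *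
    ((∑' k : ℕ, pcoef k * (f ((m : ℤ) + xseq k) + f ((m : ℤ) - xseq k))) - f (m : ℤ))

/-- The iterative construction: `hseq 0 = h₋₁ = 1_{{0}}` and
`hseq (m+1) = h_m = h_{m-1} + a_m · 1_{{-m-x_m, m+x_m}}`. -/
noncomputable def hseq : ℕ → ℤ → ℝ
  | 0 => fun n => if n = 0 then 1 else 0
  | m + 1 => fun n =>
      hseq m n +
        (if n = -(m : ℤ) - xseq m ∨ n = (m : ℤ) + xseq m then acoef m (hseq m) else 0)

/-! Adding `a_m · 1_{{±(m + x_m)}}` changes `L₀ h` on `[-m, m]` only at `n = ±m`, and only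
through the jump `k = m`: since `x_{m+1} - x_m > 2m`, no other jump links `[-m, m]` to
`±(m + x_m)`. At `n = m` the coefficient `a_m` is chosen to cancel `L₀ h_{m-1}(m)`, at `n = -m`
the same follows because every `h_m` is even, and on `[-(m-1), m-1]` induction applies. -/

noncomputable def L₀ (f : ℤ → ℝ) (n : ℤ) : ℝ :=
  (∑' k : ℕ, pcoef k * (f (n + xseq k) + f (n - xseq k))) - f n

noncomputable def bump (m : ℕ) (n : ℤ) : ℝ :=
  if n = -(m : ℤ) - xseq m ∨ n = (m : ℤ) + xseq m then 1 else 0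

lemma pcoef_eq (k : ℕ) : pcoef k = (1 / 2) ^ k / 4 := by
  rw [pcoef, pow_add, mul_inv, one_div, inv_pow]
  norm_num [div_eq_mul_inv, mul_comm]

lemma pcoef_pos (k : ℕ) : 0 < pcoef k := by
  unfold pcoef; positivity

lemma summable_pcoef : Summable pcoef := by
  rw [funext pcoef_eq]
  exact summable_geometric_two.div_const 4

lemma xseq_pos (k : ℕ) : 0 < xseq k := by
  unfold xseq; positivity

lemma xseq_strictMono : StrictMono xseq :=
  fun _ _ h ↦ pow_lt_pow_right₀ one_lt_two (by nlinarith)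

lemma xseq_add_two_mul_lt_xseq_succ (m : ℕ) : xseq m + 2 * m < xseq (m + 1) := by
  have hsq : 2 * (m + 1) ^ 2 = 2 * m ^ 2 + (4 * m + 2) := by ring
  have hlin : ((4 * m + 2 : ℕ) : ℤ) < 2 ^ (4 * m + 2) := by exact_mod_cast Nat.lt_two_pow_self
  have hone : (1 : ℤ) ≤ 2 ^ (2 * m ^ 2) := one_le_pow₀ one_le_two
  rw [xseq, xseq, hsq, pow_add]
  push_cast at hlin
  nlinarith

lemma xseq_add_two_mul_lt {m k : ℕ} (h : m < k) : xseq m + 2 * m < xseq k :=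
  (xseq_add_two_mul_lt_xseq_succ m).trans_le (xseq_strictMono.monotone h)

section L₀

variable {f g : ℤ → ℝ}

lemma summable_L₀_series {C : ℝ} (hf : ∀ n, |f n| ≤ C) (n : ℤ) :
    Summable fun k ↦ pcoef k * (f (n + xseq k) + f (n - xseq k)) := by
  refine Summable.of_norm_bounded (summable_pcoef.mul_right (2 * C)) fun k ↦ ?_
  have hp := pcoef_pos k
  rw [Real.norm_eq_abs, abs_mul, abs_of_pos hp]
  have hsum := (abs_add_le _ _).trans (add_le_add (hf (n + xseq k)) (hf (n - xseq k)))
  nlinarith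

lemma L₀_add {C D : ℝ} (hf : ∀ n, |f n| ≤ C) (hg : ∀ n, |g n| ≤ D) (n : ℤ) :
    L₀ (f + g) n = L₀ f n + L₀ g n := by
  have hterm (k : ℕ) : pcoef k * ((f + g) (n + xseq k) + (f + g) (n - xseq k)) =
      pcoef k * (f (n + xseq k) + f (n - xseq k)) + pcoef k * (g (n + xseq k) + g (n - xseq k)) := by
    simp only [Pi.add_apply]; ring
  rw [L₀, L₀, L₀, tsum_congr hterm, (summable_L₀_series hf n).tsum_add (summable_L₀_series hg n),
    Pi.add_apply]
  ring

lemma L₀_smul (c : ℝ) (n : ℤ) : L₀ (c • f) n = c * L₀ f n := by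
  simp only [L₀, Pi.smul_apply, smul_eq_mul, ← mul_add, mul_left_comm (pcoef _), tsum_mul_left]
  ring

lemma L₀_neg (hf : Function.Even f) (n : ℤ) : L₀ f (-n) = L₀ f n := by
  have hterm (k : ℕ) : f (-n + xseq k) + f (-n - xseq k) = f (n + xseq k) + f (n - xseq k) := by
    rw [show -n + xseq k = -(n - xseq k) by ring, show -n - xseq k = -(n + xseq k) by ring,
      hf, hf, add_comm]
  simp only [L₀, hterm, hf n]

end L₀

lemma bump_neg (m : ℕ) : Function.Even (bump m) := by
  intro n
  simp only [bump]
  congr 1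
  apply propext
  omega

lemma abs_bump_le (m : ℕ) (n : ℤ) : |bump m n| ≤ 1 := by
  unfold bump; split_ifs <;> norm_num

lemma L₀_bump {m : ℕ} {n : ℤ} (hn : |n| ≤ m) :
    L₀ (bump m) n = pcoef m * ((if n = m then 1 else 0) + (if n = -m then 1 else 0)) := by
  have hx := xseq_pos m
  obtain ⟨hlo, hhi⟩ := abs_le.mp hn
  have hoff (k : ℕ) (hk : k ≠ m) :
      pcoef k * (bump m (n + xseq k) + bump m (n - xseq k)) = 0 := by
    have hxk := xseq_pos k
    have hgap : xseq k < xseq m ∨ xseq m + 2 * m < xseq k := by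
      rcases Nat.lt_or_gt_of_ne hk with h | h
      exacts [.inl (xseq_strictMono h), .inr (xseq_add_two_mul_lt h)]
    simp only [bump]
    rw [if_neg (by omega), if_neg (by omega)]
    ring
  have hplus : (n + xseq m = -(m : ℤ) - xseq m ∨ n + xseq m = m + xseq m) ↔ n = m := by omega
  have hminus : (n - xseq m = -(m : ℤ) - xseq m ∨ n - xseq m = m + xseq m) ↔ n = -m := by omega
  have hcentre : ¬(n = -(m : ℤ) - xseq m ∨ n = m + xseq m) := by omega
  rw [L₀, tsum_eq_single m hoff]
  simp only [bump, hplus, hminus, if_neg hcentre, sub_zero]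

lemma hseq_succ_eq (m : ℕ) : hseq (m + 1) = hseq m + acoef m (hseq m) • bump m := by
  funext n
  simp only [hseq, bump, Pi.add_apply, Pi.smul_apply, smul_eq_mul, mul_ite, mul_one, mul_zero]

lemma hseq_even (m : ℕ) : Function.Even (hseq m) := by
  induction m with
  | zero => intro n; simp [hseq]
  | succ m ih =>
    intro n
    simp only [hseq_succ_eq, Pi.add_apply, Pi.smul_apply, ih n, bump_neg m n]

lemma abs_hseq_le (m : ℕ) : ∃ C, ∀ n, |hseq m n| ≤ C := by
  induction m with
  | zero => exact ⟨1, fun n ↦ by unfold hseq; split_ifs <;> norm_num⟩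
  | succ m ih =>
    obtain ⟨C, hC⟩ := ih
    refine ⟨C + |acoef m (hseq m)|, fun n ↦ ?_⟩
    rw [hseq_succ_eq, Pi.add_apply, Pi.smul_apply, smul_eq_mul]
    calc |hseq m n + acoef m (hseq m) * bump m n|
        ≤ |hseq m n| + |acoef m (hseq m)| * |bump m n| := (abs_add_le _ _).trans_eq (by rw [abs_mul])
      _ ≤ C + |acoef m (hseq m)| * 1 := by gcongr; exacts [hC n, abs_bump_le m n]
      _ = C + |acoef m (hseq m)| := by ring

lemma L₀_hseq_succ {m : ℕ} {n : ℤ} (hn : |n| ≤ m) :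
    L₀ (hseq (m + 1)) n = L₀ (hseq m) n +
      acoef m (hseq m) * (pcoef m * ((if n = m then 1 else 0) + (if n = -m then 1 else 0))) := by
  obtain ⟨C, hC⟩ := abs_hseq_le m
  have hbump (n : ℤ) : |(acoef m (hseq m) • bump m) n| ≤ |acoef m (hseq m)| * 1 := by
    rw [Pi.smul_apply, smul_eq_mul, abs_mul]
    gcongr
    exact abs_bump_le m n
  rw [hseq_succ_eq, L₀_add hC hbump, L₀_smul, L₀_bump hn]

lemma acoef_succ_mul_pcoef (m : ℕ) (f : ℤ → ℝ) :
    acoef (m + 1) f * pcoef (m + 1) = -L₀ f ((m + 1 : ℕ) : ℤ) := by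
  have hp : pcoef (m + 1) ≠ 0 := (pcoef_pos _).ne'
  rw [acoef, if_neg m.succ_ne_zero, L₀]
  field_simp

lemma L₀_hseq_zero_zero : L₀ (hseq 0) 0 = -1 := by
  simp [L₀, hseq, (xseq_pos _).ne']

lemma L₀_hseq_succ_self (m : ℕ) : L₀ (hseq (m + 2)) ((m + 1 : ℕ) : ℤ) = 0 := by
  rw [L₀_hseq_succ (abs_of_nonneg (by positivity)).le, if_pos rfl, if_neg (by omega), ← mul_assoc,
    acoef_succ_mul_pcoef]
  ring

theorem stmt_11 (m : ℕ) (n : ℤ) (hn : |n| ≤ (m : ℤ)) :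
    (∑' k : ℕ, pcoef k * (hseq (m + 1) (n + xseq k) + hseq (m + 1) (n - xseq k))) -
      hseq (m + 1) n = 0 := by
  change L₀ (hseq (m + 1)) n = 0
  induction m generalizing n with
  | zero =>
    obtain rfl : n = 0 := abs_nonpos_iff.mp hn
    rw [L₀_hseq_succ hn, L₀_hseq_zero_zero]
    norm_num [acoef, pcoef]
  | succ m ih =>
    rcases le_or_gt |n| m with hle | hgt
    · have hbounds := abs_le.mp hle
      rw [L₀_hseq_succ hn, ih n hle, if_neg (by omega), if_neg (by omega)]
      ring
    · rcases (abs_eq (by positivity)).mp (le_antisymm hn (by omega)) with rfl | rfl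
      · exact L₀_hseq_succ_self m
      · rw [L₀_neg (hseq_even _), L₀_hseq_succ_self m]
end

section
/- Define p_k, x_k, h_m, a_m as in the iterative construction (p_k = 2^{−k−2}, x_k = 2^{2k²}, h₋₁ = 1_{{0}}, h_m = h_{m−1} + a_m 1_{{−m−x_m, m+x_m}}, a₀ = 2, a_m = −L₀h_{m−1}(m)/p_m). Then for every ε > 0 there exists C_ε such that p_m |a_m| ≤ Σ_{k=0}^∞ p_k (|h_{m−1}(m + x_k)| + |h_{m−1}(m − x_k)|) + |h_{m−1}(m)| ≤ C_ε (1 + m)^ε for every m ≥ 0. -/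
def site (j : ℕ) : ℤ := j + xseq j

lemma four_mul_xseq_le {j k : ℕ} (h : j < k) : 4 * xseq j ≤ xseq k := by
  have : 4 * xseq j = 2 ^ (2 * j ^ 2 + 2) := by unfold xseq; ring
  rw [this]
  exact pow_le_pow_right₀ one_le_two (by nlinarith)

lemma site_pos (j : ℕ) : 0 < site j := by
  unfold site; linarith [xseq_pos j, Int.natCast_nonneg j]

lemma site_strictMono : StrictMono site := fun _ _ h => by
  unfold site; linarith [xseq_strictMono h, (Nat.cast_lt (α := ℤ)).2 h]

lemma abs_eq_site_iff {n : ℤ} {m : ℕ} :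
    |n| = site m ↔ n = -(m : ℤ) - xseq m ∨ n = m + xseq m := by
  rw [abs_eq (site_pos m).le, site]; omega

lemma hseq_succ_apply (m : ℕ) (n : ℤ) :
    hseq (m + 1) n = hseq m n + if |n| = site m then acoef m (hseq m) else 0 := by
  simp only [hseq, abs_eq_site_iff]

lemma hseq_apply_zero (m : ℕ) : hseq m 0 = 1 := by
  induction m with
  | zero => simp [hseq]
  | succ m ih => simp [hseq_succ_apply, ih, (site_pos m).ne]

lemma hseq_eq_zero {m : ℕ} {n : ℤ} (hn : n ≠ 0) (h : ∀ j < m, |n| ≠ site j) : hseq m n = 0 := by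
  induction m with
  | zero => simp [hseq, hn]
  | succ m ih =>
    rw [hseq_succ_apply, ih fun j hj => h j (hj.trans m.lt_succ_self),
      if_neg (h m m.lt_succ_self), add_zero]

lemma hseq_apply_of_abs_eq_site {m j : ℕ} {n : ℤ} (hj : j < m) (hn : |n| = site j) :
    hseq m n = acoef j (hseq j) := by
  induction m with
  | zero => omega
  | succ m ih =>
    rw [hseq_succ_apply]
    rcases (Nat.lt_succ_iff_lt_or_eq.mp hj) with hjm | rfl
    · rw [ih hjm, if_neg (hn ▸ (site_strictMono hjm).ne), add_zero]
    · have hn0 : n ≠ 0 := by rintro rfl; simp [(site_pos j).ne] at hn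
      rw [hseq_eq_zero hn0 fun i hi => hn ▸ (site_strictMono hi).ne', if_pos hn, zero_add]

lemma abs_hseq_le_s12 {m : ℕ} {n : ℤ} {B : ℝ} (hB : 1 ≤ B)
    (h : ∀ j < m, |n| = site j → |acoef j (hseq j)| ≤ B) : |hseq m n| ≤ B := by
  by_cases hn : n = 0
  · rw [hn, hseq_apply_zero, abs_one]; exact hB
  by_cases hs : ∃ j < m, |n| = site j
  · obtain ⟨j, hj, hnj⟩ := hs
    rw [hseq_apply_of_abs_eq_site hj hnj]; exact h j hj hnj
  · push Not at hs
    rw [hseq_eq_zero hn hs, abs_zero]; linarith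

def stencil (n : ℤ) : Set ℤ := {n' | n' = n ∨ ∃ k, n' = n + xseq k ∨ n' = n - xseq k}

lemma xseq_le_two_mul_of_abs_eq_site {m j : ℕ} {n : ℤ} (hj : j < m) (hn : n ∈ stencil m)
    (h : |n| = site j) : xseq j ≤ 2 * m := by
  have hjm : (j : ℤ) < m := by exact_mod_cast hj
  have hxj := xseq_pos j
  rw [abs_eq (site_pos j).le, site] at h
  rcases hn with rfl | ⟨k, rfl | rfl⟩
  · omega
  · have hxk := xseq_pos k
    rcases h with h | h
    · have hkj : k < j := xseq_strictMono.lt_iff_lt.mp (by omega)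
      linarith [four_mul_xseq_le hkj]
    · omega
  · have hxk := xseq_pos k
    rcases h with h | h
    · omega
    · have hjk : j < k := xseq_strictMono.lt_iff_lt.mp (by omega)
      linarith [four_mul_xseq_le hjk]

lemma hasSum_pcoef : HasSum pcoef (1 / 2) := by
  have : pcoef = fun k => 4⁻¹ * (1 / 2) ^ k := by
    ext k; rw [pcoef, pow_add, mul_inv, mul_comm, one_div, inv_pow]; norm_num
  have h := hasSum_geometric_two.mul_left (4⁻¹ : ℝ)
  rwa [show (4⁻¹ * 2 : ℝ) = 1 / 2 by norm_num, ← this] at h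

lemma summable_pcoef_mul {g : ℕ → ℝ} {M : ℝ} (hg : ∀ k, |g k| ≤ M) :
    Summable fun k => pcoef k * g k :=
  (hasSum_pcoef.summable.mul_right M).of_norm_bounded fun k => by
    rw [Real.norm_eq_abs, abs_mul, abs_of_pos (pcoef_pos k)]
    exact mul_le_mul_of_nonneg_left (hg k) (pcoef_pos k).le

noncomputable def stencilAbs (f : ℤ → ℝ) (n : ℤ) : ℝ :=
  (∑' k : ℕ, pcoef k * (|f (n + xseq k)| + |f (n - xseq k)|)) + |f n|

lemma stencilAbs_le {f : ℤ → ℝ} {n : ℤ} {B : ℝ} (hB : ∀ n' ∈ stencil n, |f n'| ≤ B) :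
    stencilAbs f n ≤ 2 * B := by
  have hpair (k : ℕ) : |f (n + xseq k)| + |f (n - xseq k)| ≤ 2 * B := by
    linarith [hB _ (Or.inr ⟨k, Or.inl rfl⟩), hB _ (Or.inr ⟨k, Or.inr rfl⟩)]
  have hsum : ∑' k, pcoef k * (|f (n + xseq k)| + |f (n - xseq k)|) ≤ B := by
    have hsummable := summable_pcoef_mul fun k => (abs_of_nonneg (by positivity)).trans_le (hpair k)
    calc _ ≤ ∑' k, pcoef k * (2 * B) :=
          hsummable.tsum_le_tsum (fun k => mul_le_mul_of_nonneg_left (hpair k) (pcoef_pos k).le)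
            (hasSum_pcoef.summable.mul_right _)
      _ = B := by rw [tsum_mul_right, hasSum_pcoef.tsum_eq]; ring
  unfold stencilAbs
  linarith [hB n (Or.inl rfl)]

lemma abs_le_stencilAbs (f : ℤ → ℝ) (n : ℤ) : |f n| ≤ stencilAbs f n :=
  le_add_of_nonneg_left <| tsum_nonneg fun k => mul_nonneg (pcoef_pos k).le (by positivity)

lemma pcoef_mul_abs_acoef_le {f : ℤ → ℝ} {M : ℝ} (hf : ∀ n, |f n| ≤ M) (hf0 : f 0 = 1) (m : ℕ) :
    pcoef m * |acoef m f| ≤ stencilAbs f m := by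
  rcases eq_or_ne m 0 with rfl | hm
  · have := abs_le_stencilAbs f 0
    rw [hf0, abs_one] at this
    norm_num [acoef, pcoef]
    linarith
  have hp := pcoef_pos m
  have hsum : |∑' k : ℕ, pcoef k * (f (m + xseq k) + f (m - xseq k))| ≤
      ∑' k : ℕ, pcoef k * (|f (m + xseq k)| + |f (m - xseq k)|) := by
    rw [← Real.norm_eq_abs]
    refine tsum_of_norm_bounded (summable_pcoef_mul (M := M + M) fun k => ?_).hasSum fun k => ?_
    · rw [abs_of_nonneg (by positivity)]; exact add_le_add (hf _) (hf _)
    · rw [Real.norm_eq_abs, abs_mul, abs_of_pos (pcoef_pos k)]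
      exact mul_le_mul_of_nonneg_left (abs_add_le _ _) (pcoef_pos k).le
  rw [acoef, if_neg hm, abs_mul, abs_neg, abs_of_pos (one_div_pos.mpr hp), ← mul_assoc,
    mul_one_div_cancel hp.ne', one_mul]
  exact (abs_sub _ _).trans (add_le_add hsum le_rfl)

lemma abs_hseq_le_sum (m : ℕ) (n : ℤ) :
    |hseq m n| ≤ 1 + ∑ j ∈ Finset.range m, |acoef j (hseq j)| :=
  abs_hseq_le_s12 (le_add_of_nonneg_right (Finset.sum_nonneg fun _ _ => abs_nonneg _))
    fun _ hj _ => (Finset.single_le_sum (f := fun i => |acoef i (hseq i)|)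
      (fun _ _ => abs_nonneg _) (Finset.mem_range.2 hj)).trans (le_add_of_nonneg_left zero_le_one)

lemma abs_acoef_hseq_le (m : ℕ) : |acoef m (hseq m)| ≤ 2 ^ (m + 2) * stencilAbs (hseq m) m := by
  have h := pcoef_mul_abs_acoef_le (abs_hseq_le_sum m) (hseq_apply_zero m) m
  have hp : (2 : ℝ) ^ (m + 2) * pcoef m = 1 := mul_inv_cancel₀ (by positivity)
  calc |acoef m (hseq m)| = 2 ^ (m + 2) * (pcoef m * |acoef m (hseq m)|) := by
        rw [← mul_assoc, hp, one_mul]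
    _ ≤ _ := mul_le_mul_of_nonneg_left h (by positivity)

open Filter in
lemma eventually_two_pow_mul_rpow_le {ε : ℝ} (hε : 0 < ε) :
    ∀ᶠ j : ℕ in atTop, 2 ^ (j + 3) * (1 + j : ℝ) ^ ε ≤ (1 + xseq j / 2 : ℝ) ^ ε := by
  filter_upwards [eventually_ge_atTop 2, eventually_ge_atTop ⌈3 / ε⌉₊] with j hj2 hjε
  have hj : (2 : ℝ) ≤ j := by exact_mod_cast hj2
  have hjε : 3 ≤ j * ε := (div_le_iff₀ hε).1 (Nat.ceil_le.1 hjε)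
  have hxj : (xseq j / 2 : ℝ) = 2 ^ ((2 * j ^ 2 : ℝ) - 1) := by
    rw [Real.rpow_sub two_pos, Real.rpow_one, xseq]
    push_cast
    rw [← Real.rpow_natCast]
    push_cast
    rfl
  have hexp : (j + 3 : ℝ) + j * ε ≤ (2 * j ^ 2 - 1) * ε := by nlinarith
  calc 2 ^ (j + 3) * (1 + j : ℝ) ^ ε ≤ 2 ^ (j + 3) * ((2 : ℝ) ^ j) ^ ε := by
        gcongr
        rw [add_comm]
        exact_mod_cast Nat.lt_two_pow_self
    _ = (2 : ℝ) ^ ((j + 3 : ℝ) + j * ε) := by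
        rw [Real.rpow_add two_pos, ← Real.rpow_natCast_mul two_pos.le, ← Real.rpow_natCast]
        push_cast; rfl
    _ ≤ (2 : ℝ) ^ ((2 * j ^ 2 - 1) * ε) := Real.rpow_le_rpow_of_exponent_le one_le_two hexp
    _ = (xseq j / 2 : ℝ) ^ ε := by rw [hxj, Real.rpow_mul two_pos.le]
    _ ≤ (1 + xseq j / 2 : ℝ) ^ ε := by
        have : (0 : ℝ) ≤ xseq j := by exact_mod_cast (xseq_pos j).le
        gcongr; linarith

lemma stencilAbs_hseq_le {ε : ℝ} (hε : 0 < ε) :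
    ∃ C : ℝ, ∀ m : ℕ, stencilAbs (hseq m) m ≤ C * (1 + m : ℝ) ^ ε := by
  obtain ⟨J, hJ⟩ := Filter.eventually_atTop.1 (eventually_two_pow_mul_rpow_le hε)
  set A : ℝ := 1 + ∑ j ∈ Finset.range J, |acoef j (hseq j)|
  have hA : 1 ≤ A := le_add_of_nonneg_right (Finset.sum_nonneg fun _ _ => abs_nonneg _)
  refine ⟨2 * A, fun m => ?_⟩
  induction m using Nat.strong_induction_on with
  | _ m ih =>
  have hm : (1 : ℝ) ≤ (1 + m : ℝ) ^ ε := 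
    Real.one_le_rpow (le_add_of_nonneg_right m.cast_nonneg) hε.le
  have hacoef : ∀ j < m, xseq j ≤ 2 * m → |acoef j (hseq j)| ≤ A * (1 + m : ℝ) ^ ε := by
    intro j hjm hxj
    rcases lt_or_ge j J with hjJ | hjJ
    · have h := abs_hseq_le_sum J (site j)
      rw [hseq_apply_of_abs_eq_site hjJ (abs_of_pos (site_pos j))] at h
      exact h.trans (le_mul_of_one_le_right (by linarith) hm)
    have hxj' : (xseq j / 2 : ℝ) ≤ m := by
      rw [div_le_iff₀ two_pos, mul_comm]; exact_mod_cast hxj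
    calc |acoef j (hseq j)| ≤ 2 ^ (j + 2) * (2 * A * (1 + j : ℝ) ^ ε) :=
          (abs_acoef_hseq_le j).trans (mul_le_mul_of_nonneg_left (ih j hjm) (by positivity))
      _ = A * (2 ^ (j + 3) * (1 + j : ℝ) ^ ε) := by ring
      _ ≤ A * (1 + xseq j / 2 : ℝ) ^ ε := by gcongr; exact hJ j hjJ
      _ ≤ A * (1 + m : ℝ) ^ ε := by
          have : (0 : ℝ) ≤ xseq j := by exact_mod_cast (xseq_pos j).le
          gcongr
  have hvalues : ∀ n ∈ stencil m, |hseq m n| ≤ A * (1 + m : ℝ) ^ ε := fun n hn =>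
    abs_hseq_le_s12 (one_le_mul_of_one_le_of_one_le hA hm) fun j hj hnj =>
      hacoef j hj (xseq_le_two_mul_of_abs_eq_site hj hn hnj)
  linarith [stencilAbs_le hvalues]

theorem stmt_12 (ε : ℝ) (hε : 0 < ε) :
    ∃ C : ℝ, ∀ m : ℕ,
      pcoef m * |acoef m (hseq m)| ≤
          (∑' k : ℕ, pcoef k *
            (|hseq m ((m : ℤ) + xseq k)| + |hseq m ((m : ℤ) - xseq k)|)) +
            |hseq m (m : ℤ)| ∧
        (∑' k : ℕ, pcoef k *
            (|hseq m ((m : ℤ) + xseq k)| + |hseq m ((m : ℤ) - xseq k)|)) +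
            |hseq m (m : ℤ)| ≤ C * (1 + m : ℝ) ^ ε := by
  obtain ⟨C, hC⟩ := stencilAbs_hseq_le hε
  exact ⟨C, fun m =>
    ⟨pcoef_mul_abs_acoef_le (abs_hseq_le_sum m) (hseq_apply_zero m) m, hC m⟩⟩
end
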